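/- arXiv:2503.06957 — 4 statements merged into one kernel-verified Lean document; each statement's English description precedes it below -/
import Mathlib

section
/- Let K : ℤ → ℂ be positive definite, let c₀ ∈ ℂ satisfy Re c₀ ≥ −K(0)/2, and set c₀′ = c₀ − 2 Re c₀ − K(0) and K′(n) = K(n) + δ(n)(2 Re c₀ + K(0)), where δ is the discrete delta function; then K′ is positive definite and Re c₀′ = −K′(0)/2. Assume K′ is not identically zero, let λ = 𝓕^{−1}[K′] ∈ 𝓜₊(S¹), write (μ, ζ₀′) = 𝓑[λ, 2 Im c₀′], set J = 4𝓕[μ] and ζ₀ = 2i ζ₀′ − J(0)/2. Then for any sequences x, y : ℕ → ℂ satisfying y(n) = c₀ x(n) + Σ_{j=0}^{n} K(n−j) x(j) for all n, one has x(n) = ζ₀ y(n) + Σ_{j=0}^{n} J(n−j) y(j) for all n. -/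
/-!
`K′ = 𝓕[λ]` is positive definite because `∑ c̄ⱼ c_k K′(tⱼ − t_k) = ∫ |∑ c_k w^{t_k}|² dλ(w)`.

Expanding `(1 + u)/(1 − u) = 1 + 2 ∑_{n ≥ 1} uⁿ` at `u = w̄ z` shows that `Q_σ[μ]` has Taylor
coefficients `𝓕[μ](0) + iσ` and `2 𝓕[μ](n)`, `n ≥ 1`. For the data at hand this reads
`Q_{2 Im c₀′}[λ] = 2 (c₀ + ∑ K(n) zⁿ)` and `Q_{ζ₀′}[μ] = (ζ₀ + ∑ J(n) zⁿ) / 2`, so by uniqueness of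
Taylor coefficients the identity `Q_{2 Im c₀′}[λ] · Q_{ζ₀′}[μ] = 1` makes the two Volterra symbols
`c₀ + ∑ K(n) Xⁿ` and `ζ₀ + ∑ J(n) Xⁿ` mutually inverse in `ℂ⟦X⟧`. A causal Volterra equation is
multiplication of generating functions by its symbol, so multiplying `y` by the second symbol
returns `x`.
-/

open MeasureTheory Complex Filter Metric Set
open scoped ENNReal

noncomputable section

instance : MeasurableSpace Circle := borel Circle
instance : BorelSpace Circle := ⟨rfl⟩

/-- Positive definiteness of a kernel `K : ℤ → ℂ`: every matrix `(K(n_j − n_k))_{j,k}` is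
positive semidefinite. -/
def PosDefKernel (K : ℤ → ℂ) : Prop :=
  ∀ (N : ℕ) (t : Fin N → ℤ) (c : Fin N → ℂ),
    0 ≤ (∑ j, ∑ k, (starRingEnd ℂ) (c j) * c k * K (t j - t k)).re ∧
    (∑ j, ∑ k, (starRingEnd ℂ) (c j) * c k * K (t j - t k)).im = 0

/-- Cauchy transform of a measure on the circle. -/
noncomputable def cauchyT (μ : Measure Circle) (z : ℂ) : ℂ :=
  ∫ w : Circle, (1 + (starRingEnd ℂ) (w : ℂ) * z) / (1 - (starRingEnd ℂ) (w : ℂ) * z) ∂μ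

/-- σ-Cauchy transform. -/
noncomputable def cauchyTσ (μ : Measure Circle) (σ : ℝ) (z : ℂ) : ℂ := cauchyT μ z + σ * I

/-- Discrete Fourier transform of a measure on the circle:
`𝓕[μ](n) = ∫₀^{2π} e^{−inθ} dμ(θ) = ∫ w^{−n} dμ(w)`. -/
noncomputable def fourierC (μ : Measure Circle) (n : ℤ) : ℂ :=
  ∫ w : Circle, ((w ^ (-n) : Circle) : ℂ) ∂μ

open PowerSeries ComplexConjugate
open scoped NNReal

lemma Continuous.integrable_of_compactSpace {X E : Type*} [TopologicalSpace X] [CompactSpace X]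
    [MeasurableSpace X] [OpensMeasurableSpace X] [NormedAddCommGroup E] {μ : Measure X}
    [IsFiniteMeasure μ] {f : X → E} (hf : Continuous f) : Integrable f μ :=
  hf.integrable_of_hasCompactSupport (.of_compactSpace f)

lemma hasSum_herglotz_kernel {u : ℂ} (hu : ‖u‖ < 1) :
    HasSum (fun n : ℕ => (if n = 0 then 1 else 2) * u ^ n) ((1 + u) / (1 - u)) := by
  have hu1 : 1 - u ≠ 0 := sub_ne_zero.mpr fun h => by simp [← h] at hu
  rw [show (1 + u) / (1 - u) = 2 * (1 - u)⁻¹ - 1 by field_simp; ring]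
  refine (((hasSum_geometric_of_norm_lt_one hu).mul_left 2).sub (hasSum_ite_eq 0 1)).congr_fun
    fun n => ?_
  rcases eq_or_ne n 0 with rfl | hn <;> norm_num [*]

section Circle

@[fun_prop]
lemma continuous_coe_zpow (m : ℤ) : Continuous fun w : Circle => ((w ^ m : Circle) : ℂ) :=
  continuous_subtype_val.comp (continuous_zpow m)

lemma coe_zpow_neg_natCast_eq_conj_pow (w : Circle) (n : ℕ) :
    ((w ^ (-(n : ℤ)) : Circle) : ℂ) = conj (w : ℂ) ^ n := by
  rw [zpow_neg, zpow_natCast, ← inv_pow, Circle.coe_pow, Circle.coe_inv_eq_conj]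

lemma fourierC_zero (μ : Measure Circle) : fourierC μ 0 = μ.real univ := by
  simp [fourierC]

variable (μ : Measure Circle) [IsFiniteMeasure μ]

lemma norm_fourierC_le (n : ℤ) : ‖fourierC μ n‖ ≤ μ.real univ := by
  simpa [fourierC] using norm_integral_le_of_norm_le_const (μ := μ) (C := 1)
    (f := fun w : Circle => ((w ^ (-n) : Circle) : ℂ)) (.of_forall fun w => (Circle.norm_coe _).le)

lemma posDefKernel_fourierC : PosDefKernel (fourierC μ) := by
  intro N t c
  set S : Circle → ℂ := fun w => ∑ j, c j * ((w ^ t j : Circle) : ℂ)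
  have hint : ∀ j k, Integrable
      (fun w : Circle => conj (c j) * c k * ((w ^ (t k - t j) : Circle) : ℂ)) μ :=
    fun j k => Continuous.integrable_of_compactSpace (by fun_prop)
  have hquad : ∑ j, ∑ k, conj (c j) * c k * fourierC μ (t j - t k)
      = ((∫ w, ‖S w‖ ^ 2 ∂μ : ℝ) : ℂ) := by
    calc ∑ j, ∑ k, conj (c j) * c k * fourierC μ (t j - t k)
        = ∫ w, ∑ j, ∑ k, conj (c j) * c k * ((w ^ (t k - t j) : Circle) : ℂ) ∂μ := by
          rw [integral_finsetSum _ fun j _ => integrable_finsetSum _ fun k _ => hint j k]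
          simp_rw [integral_finsetSum _ fun k _ => hint _ k, integral_const_mul, fourierC,
            neg_sub]
      _ = ∫ w, conj (S w) * S w ∂μ := by
          refine integral_congr_ae (.of_forall fun w => ?_)
          simp only [S, map_sum, map_mul, Finset.sum_mul_sum, zpow_sub, Circle.coe_mul,
            Circle.coe_inv_eq_conj]
          exact Finset.sum_congr rfl fun j _ => Finset.sum_congr rfl fun k _ => by ring
      _ = ((∫ w, ‖S w‖ ^ 2 ∂μ : ℝ) : ℂ) := by
          simp_rw [conj_mul', ← ofReal_pow]
          exact integral_ofReal
  rw [hquad]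
  exact ⟨(ofReal_re _).symm ▸ integral_nonneg fun w => sq_nonneg ‖S w‖, ofReal_im _⟩

lemma hasSum_cauchyT {z : ℂ} (hz : ‖z‖ < 1) :
    HasSum (fun n : ℕ => (if n = 0 then 1 else 2) * fourierC μ n * z ^ n) (cauchyT μ z) := by
  set F : ℕ → Circle → ℂ := fun n w => (if n = 0 then 1 else 2) * (conj (w : ℂ) * z) ^ n
  have hnorm : ∀ n w, ‖F n w‖ ≤ 2 * ‖z‖ ^ n := fun n w => by
    rcases eq_or_ne n 0 with rfl | hn <;> simp [F, *, Circle.norm_coe]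
  have hint : ∀ n, Integrable (F n) μ :=
    fun n => Continuous.integrable_of_compactSpace (by fun_prop)
  have hsum : Summable fun n => ∫ w, ‖F n w‖ ∂μ := by
    refine .of_nonneg_of_le (fun n => integral_nonneg fun w => norm_nonneg _) (fun n => ?_)
      ((summable_geometric_of_lt_one (norm_nonneg z) hz).mul_left (2 * μ.real univ))
    calc ∫ w, ‖F n w‖ ∂μ ≤ ∫ _, 2 * ‖z‖ ^ n ∂μ :=
          integral_mono (hint n).norm (integrable_const _) (hnorm n)
      _ = 2 * μ.real univ * ‖z‖ ^ n := by simp; ring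
  have hkernel : ∀ w : Circle, ‖conj (w : ℂ) * z‖ < 1 := fun w => by
    simpa [Circle.norm_coe] using hz
  rw [cauchyT, integral_congr_ae
    (.of_forall fun w => (hasSum_herglotz_kernel (hkernel w)).tsum_eq.symm)]
  refine (hasSum_integral_of_summable_integral_norm hint hsum).congr_fun fun n => ?_
  simp only [F, fourierC, mul_pow, ← coe_zpow_neg_natCast_eq_conj_pow, integral_const_mul,
    integral_mul_const]
  ring

end Circle

lemma eq_zero_of_hasSum_mul_pow_zero {c : ℕ → ℂ} {r : ℝ≥0} (hr : 0 < r)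
    (h : ∀ z ∈ ball (0 : ℂ) r, HasSum (fun n => c n * z ^ n) 0) : c = 0 := by
  have hr2 : (r / 2 : ℝ≥0) < r := NNReal.half_lt_self hr.ne'
  have hradius : ((r / 2 : ℝ≥0) : ℝ≥0∞) ≤ (FormalMultilinearSeries.ofScalars ℂ c).radius := by
    refine FormalMultilinearSeries.le_radius_of_tendsto _ (l := 0) ?_
    have hz : ((r / 2 : ℝ≥0) : ℂ) ∈ ball (0 : ℂ) r := by
      simpa [Complex.norm_real] using hr2
    simpa [FormalMultilinearSeries.ofScalars_norm, norm_mul, norm_pow] using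
      ((h _ hz).summable.tendsto_atTop_zero).norm
  have hps : HasFPowerSeriesOnBall 0 (FormalMultilinearSeries.ofScalars ℂ c) 0 (r / 2 : ℝ≥0) :=
    { r_le := hradius
      r_pos := by simpa using hr.ne'
      hasSum := fun {y} hy => by
        have hy' : y ∈ ball (0 : ℂ) r := by
          rw [Metric.eball_coe] at hy
          exact Metric.ball_subset_ball hr2.le hy
        simpa [FormalMultilinearSeries.ofScalars_apply_eq, mul_comm] using h y hy' }
  exact (FormalMultilinearSeries.ofScalars_series_eq_zero (E := ℂ)).mp
    hps.hasFPowerSeriesAt.eq_zero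

lemma summable_norm_mul_pow_of_norm_le {c : ℕ → ℂ} {C : ℝ} (hc : ∀ n, ‖c n‖ ≤ C) {z : ℂ}
    (hz : ‖z‖ < 1) : Summable fun n => ‖c n * z ^ n‖ := by
  refine .of_nonneg_of_le (fun n => norm_nonneg _) (fun n => ?_)
    ((summable_geometric_of_lt_one (norm_nonneg z) hz).mul_left C)
  rw [norm_mul, norm_pow]
  exact mul_le_mul_of_nonneg_right (hc n) (by positivity)

open Finset in
lemma PowerSeries.hasSum_coeff_mul_mul_pow {φ ψ : ℂ⟦X⟧} {z a b : ℂ}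
    (hφ : Summable fun n => ‖coeff n φ * z ^ n‖) (hψ : Summable fun n => ‖coeff n ψ * z ^ n‖)
    (ha : HasSum (fun n => coeff n φ * z ^ n) a) (hb : HasSum (fun n => coeff n ψ * z ^ n) b) :
    HasSum (fun n => coeff n (φ * ψ) * z ^ n) (a * b) := by
  have hterm : ∀ n, coeff n (φ * ψ) * z ^ n
      = ∑ kl ∈ antidiagonal n, coeff kl.1 φ * z ^ kl.1 * (coeff kl.2 ψ * z ^ kl.2) := by
    intro n
    rw [coeff_mul, sum_mul]
    refine sum_congr rfl fun kl hkl => ?_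
    rw [← mem_antidiagonal.mp hkl, pow_add]
    ring
  simp_rw [hterm]
  rw [← ha.tsum_eq, ← hb.tsum_eq,
    tsum_mul_tsum_eq_tsum_sum_antidiagonal_of_summable_norm hφ hψ]
  exact (summable_norm_sum_mul_antidiagonal_of_summable_norm hφ hψ).of_norm.hasSum

lemma PowerSeries.mul_eq_one_of_hasSum {φ ψ : ℂ⟦X⟧} {f g : ℂ → ℂ} {C D : ℝ}
    (hφ : ∀ n, ‖coeff n φ‖ ≤ C) (hψ : ∀ n, ‖coeff n ψ‖ ≤ D)
    (hf : ∀ z ∈ ball (0 : ℂ) 1, HasSum (fun n => coeff n φ * z ^ n) (f z))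
    (hg : ∀ z ∈ ball (0 : ℂ) 1, HasSum (fun n => coeff n ψ * z ^ n) (g z))
    (hfg : ∀ z ∈ ball (0 : ℂ) 1, f z * g z = 1) : φ * ψ = 1 := by
  suffices h : (fun n => coeff n (φ * ψ - 1)) = 0 by
    ext n; simpa [sub_eq_zero] using congr_fun h n
  refine eq_zero_of_hasSum_mul_pow_zero one_pos fun z hz => ?_
  have hz1 : ‖z‖ < 1 := by simpa using hz
  have hprod := hasSum_coeff_mul_mul_pow (summable_norm_mul_pow_of_norm_le hφ hz1)
    (summable_norm_mul_pow_of_norm_le hψ hz1) (hf z hz) (hg z hz)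
  have hone : HasSum (fun n => coeff n (1 : ℂ⟦X⟧) * z ^ n) 1 :=
    (hasSum_ite_eq 0 (1 : ℂ)).congr_fun fun n => by
      rcases eq_or_ne n 0 with rfl | hn <;> simp [coeff_one, *]
  simpa [sub_mul, hfg z hz] using hprod.sub hone

section Symbols

def cauchySeries (μ : Measure Circle) (σ : ℝ) : ℂ⟦X⟧ :=
  C (σ * I) + mk fun n => (if n = 0 then 1 else 2) * fourierC μ n

lemma coeff_cauchySeries (μ : Measure Circle) (σ : ℝ) (n : ℕ) :
    coeff n (cauchySeries μ σ)
      = (if n = 0 then σ * I else 0) + (if n = 0 then 1 else 2) * fourierC μ n := by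
  simp [cauchySeries, coeff_C]

variable (μ ν : Measure Circle) [IsFiniteMeasure μ] [IsFiniteMeasure ν] (σ τ : ℝ)

lemma hasSum_cauchyTσ {z : ℂ} (hz : ‖z‖ < 1) :
    HasSum (fun n => coeff n (cauchySeries μ σ) * z ^ n) (cauchyTσ μ σ z) := by
  rw [cauchyTσ, add_comm]
  refine ((hasSum_ite_eq 0 (σ * I : ℂ)).add (hasSum_cauchyT μ hz)).congr_fun fun n => ?_
  rcases eq_or_ne n 0 with rfl | hn <;> simp [coeff_cauchySeries, *]

lemma norm_coeff_cauchySeries_le (n : ℕ) :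
    ‖coeff n (cauchySeries μ σ)‖ ≤ |σ| + 2 * μ.real univ := by
  have hF := norm_fourierC_le μ n
  rcases eq_or_ne n 0 with rfl | hn
  · simp only [coeff_cauchySeries, if_pos, one_mul]
    calc ‖σ * I + fourierC μ 0‖ ≤ |σ| + μ.real univ :=
          (norm_add_le _ _).trans (add_le_add (by simp) hF)
      _ ≤ |σ| + 2 * μ.real univ := by linarith [measureReal_nonneg (μ := μ) (s := univ)]
  · simp only [coeff_cauchySeries, if_neg hn, zero_add, norm_mul]
    norm_num
    linarith [abs_nonneg σ]

lemma cauchySeries_mul_eq_one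
    (h : ∀ z ∈ ball (0 : ℂ) 1, cauchyTσ μ σ z * cauchyTσ ν τ z = 1) :
    cauchySeries μ σ * cauchySeries ν τ = 1 :=
  mul_eq_one_of_hasSum (norm_coeff_cauchySeries_le μ σ) (norm_coeff_cauchySeries_le ν τ)
    (fun _ hz => hasSum_cauchyTσ μ σ (mem_ball_zero_iff.mp hz))
    (fun _ hz => hasSum_cauchyTσ ν τ (mem_ball_zero_iff.mp hz)) h

end Symbols

def volterraSeries (c : ℂ) (k : ℤ → ℂ) : ℂ⟦X⟧ :=
  C c + mk fun n => k n

open Finset in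
lemma coeff_volterraSeries_mul (c : ℂ) (k : ℤ → ℂ) (x : ℕ → ℂ) (n : ℕ) :
    coeff n (volterraSeries c k * mk x)
      = c * x n + ∑ j ∈ range (n + 1), k ((n : ℤ) - (j : ℤ)) * x j := by
  rw [volterraSeries, add_mul, map_add, coeff_C_mul, coeff_mk, coeff_mul,
    ← Nat.sum_antidiagonal_swap]
  simp only [Prod.fst_swap, Prod.snd_swap, coeff_mk]
  rw [Nat.sum_antidiagonal_eq_sum_range_succ (fun j i => k i * x j)]
  congr 1
  refine sum_congr rfl fun j hj => ?_
  rw [Nat.cast_sub (Nat.lt_succ_iff.mp (mem_range.mp hj))]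

theorem statement2_general (K : ℤ → ℂ) (c₀ : ℂ)
    (c₀' : ℂ) (hc₀' : c₀' = c₀ - 2 * (c₀.re : ℂ) - K 0)
    (K' : ℤ → ℂ)
    (hK'def : ∀ n : ℤ, K' n = K n + (if n = 0 then 2 * (c₀.re : ℂ) + K 0 else 0))
    (lam : Measure Circle) [IsFiniteMeasure lam]
    (hFour : ∀ n : ℤ, K' n = fourierC lam n)
    (mu : Measure Circle) [IsFiniteMeasure mu] (ζ₀' : ℝ)
    (hB : ∀ z ∈ Metric.ball (0 : ℂ) 1,
      cauchyTσ lam (2 * c₀'.im) z * cauchyTσ mu ζ₀' z = 1)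
    (J : ℤ → ℂ) (hJ : ∀ n : ℤ, J n = 4 * fourierC mu n)
    (ζ₀ : ℂ) (hζ₀ : ζ₀ = 2 * I * (ζ₀' : ℂ) - J 0 / 2) :
    PosDefKernel K' ∧
    (c₀'.re : ℂ) = -(K' 0) / 2 ∧
    ∀ x y : ℕ → ℂ,
      (∀ n : ℕ, y n = c₀ * x n + ∑ j ∈ Finset.range (n + 1), K ((n : ℤ) - (j : ℤ)) * x j) →
      ∀ n : ℕ, x n = ζ₀ * y n + ∑ j ∈ Finset.range (n + 1), J ((n : ℤ) - (j : ℤ)) * y j := by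
  have hK0 : (K 0).im = 0 := by
    have h := congrArg im ((hK'def 0).symm.trans (hFour 0))
    simp [fourierC_zero] at h
    linarith
  refine ⟨funext hFour ▸ posDefKernel_fourierC lam, ?_, fun x y hxy => ?_⟩
  · rw [hK'def, if_pos rfl, hc₀']
    apply Complex.ext <;> simp [hK0]; ring
  have hsymbolK : volterraSeries c₀ K = C 2⁻¹ * cauchySeries lam (2 * c₀'.im) := by
    ext n
    rcases eq_or_ne n 0 with rfl | hn
    · simp [volterraSeries, coeff_cauchySeries, ← hFour, hK'def, hc₀']
      apply Complex.ext <;> simp [hK0]; ring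
    · simp [volterraSeries, coeff_cauchySeries, coeff_C, ← hFour, hK'def, hn]
  have hsymbolJ : volterraSeries ζ₀ J = C 2 * cauchySeries mu ζ₀' := by
    ext n
    rcases eq_or_ne n 0 with rfl | hn
    · simp [volterraSeries, coeff_cauchySeries, hζ₀, hJ]; ring
    · simp [volterraSeries, coeff_cauchySeries, coeff_C, hJ, hn]; ring
  have hinv : volterraSeries ζ₀ J * volterraSeries c₀ K = 1 := by
    rw [hsymbolJ, hsymbolK, mul_mul_mul_comm, ← map_mul, mul_inv_cancel₀ two_ne_zero, map_one,
      one_mul, mul_comm, cauchySeries_mul_eq_one lam mu _ _ hB]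
  have hy : mk y = volterraSeries c₀ K * mk x := by
    ext n
    rw [coeff_mk, coeff_volterraSeries_mul, hxy]
  intro n
  rw [← coeff_volterraSeries_mul, hy, ← mul_assoc, hinv, one_mul, coeff_mk]

theorem statement2 (K : ℤ → ℂ) (hK : PosDefKernel K) (c₀ : ℂ) (hc : -(K 0).re / 2 ≤ c₀.re)
    (c₀' : ℂ) (hc₀' : c₀' = c₀ - 2 * (c₀.re : ℂ) - K 0)
    (K' : ℤ → ℂ)
    (hK'def : ∀ n : ℤ, K' n = K n + (if n = 0 then 2 * (c₀.re : ℂ) + K 0 else 0))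
    (lam : Measure Circle) [IsFiniteMeasure lam] (hlam : lam ≠ 0)
    (hFour : ∀ n : ℤ, K' n = fourierC lam n)
    (mu : Measure Circle) [IsFiniteMeasure mu] (hmu : mu ≠ 0) (ζ₀' : ℝ)
    (hB : ∀ z ∈ Metric.ball (0 : ℂ) 1,
      cauchyTσ lam (2 * c₀'.im) z * cauchyTσ mu ζ₀' z = 1)
    (J : ℤ → ℂ) (hJ : ∀ n : ℤ, J n = 4 * fourierC mu n)
    (ζ₀ : ℂ) (hζ₀ : ζ₀ = 2 * I * (ζ₀' : ℂ) - J 0 / 2) :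
    PosDefKernel K' ∧
    (c₀'.re : ℂ) = -(K' 0) / 2 ∧
    ∀ x y : ℕ → ℂ,
      (∀ n : ℕ, y n = c₀ * x n + ∑ j ∈ Finset.range (n + 1), K ((n : ℤ) - (j : ℤ)) * x j) →
      ∀ n : ℕ, x n = ζ₀ * y n + ∑ j ∈ Finset.range (n + 1), J ((n : ℤ) - (j : ℤ)) * y j :=
  statement2_general K c₀ c₀' hc₀' K' hK'def lam hFour mu ζ₀' hB J hJ ζ₀ hζ₀
end
end

section
/- Let μ_n, μ ∈ 𝓜_c(ℝ). Then μ_n → μ in the W_∞ topology if and only if μ_n ⇀ μ weakly and the supports supp μ_n are uniformly bounded (i.e., contained in a fixed compact interval). -/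
/-!
If the supports are not uniformly bounded, pick for every `k` a measure `μ_{n_k}` charging
`{|s| > k}` with some mass `m_k > 0`. A continuous function that is `≥ (k + 1) / m_k` on
`{|s| > k}` for every `k` has `∫ f dμ_{n_k} ≥ k + 1`, so its integrals are unbounded and cannot
converge. Conversely, once all supports lie in `[-B, B]`, a continuous `f` may be replaced by the
bounded continuous function `x ↦ f (max (-B) (min B x))` without changing any of the integrals.
-/

open MeasureTheory Filter Set Topology

noncomputable section

/-- `λ ∈ 𝓜_c(ℝ)`: nonzero finite non-negative compactly supported. -/
def Mc (lam : Measure ℝ) : Prop :=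
  lam ≠ 0 ∧ IsFiniteMeasure lam ∧ ∃ R : ℝ, lam {s : ℝ | R < |s|} = 0

theorem exists_continuous_ge_of_locally_bddAbove {X : Type*} [TopologicalSpace X] [NormalSpace X]
    [ParacompactSpace X] {F : X → ℝ} (hF : ∀ x, ∃ c, ∀ᶠ y in 𝓝 x, F y ≤ c) :
    ∃ g : C(X, ℝ), ∀ x, F x ≤ g x :=
  exists_continuous_forall_mem_convex_of_local_const (t := fun x => Ici (F x))
    (fun _ => convex_Ici _) hF

theorem exists_continuous_nonneg_ge_of_lt_abs (a : ℕ → ℝ) :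
    ∃ f : ℝ → ℝ, Continuous f ∧ 0 ≤ f ∧ ∀ (k : ℕ) (x : ℝ), (k : ℝ) < |x| → a k ≤ f x := by
  set F : ℝ → ℝ := fun x => ∑ k ∈ Finset.range ⌈|x|⌉₊, |a k|
  have hF : ∀ x, ∃ c, ∀ᶠ y in 𝓝 x, F y ≤ c := by
    intro x
    refine ⟨∑ k ∈ Finset.range (⌈|x|⌉₊ + 1), |a k|, ?_⟩
    filter_upwards [continuous_abs.continuousAt.eventually_lt continuousAt_const
      (lt_add_one |x|)] with y hy
    have hceil : ⌈|y|⌉₊ ≤ ⌈|x|⌉₊ + 1 := Nat.ceil_le.2 <| by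
      push_cast
      linarith [Nat.le_ceil |x|]
    exact Finset.sum_le_sum_of_subset_of_nonneg (Finset.range_mono hceil)
      fun k _ _ => abs_nonneg (a k)
  obtain ⟨g, hg⟩ := exists_continuous_ge_of_locally_bddAbove hF
  refine ⟨g, g.continuous, fun x => (Finset.sum_nonneg fun k _ => abs_nonneg _).trans (hg x),
    fun k x hkx => ?_⟩
  calc a k ≤ |a k| := le_abs_self _
    _ ≤ F x := Finset.single_le_sum (fun k _ => abs_nonneg (a k))
        (Finset.mem_range.2 (Nat.lt_ceil.2 hkx))
    _ ≤ g x := hg x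

section

variable {ν : Measure ℝ} {R B : ℝ}

theorem ae_mem_Icc_of_measure_lt_abs_eq_zero (h : ν {s | R < |s|} = 0) (hRB : R ≤ B) :
    ∀ᵐ x ∂ν, x ∈ Icc (-B) B := by
  rw [ae_iff]
  refine measure_mono_null (fun x hx => ?_) h
  simp only [mem_ofPred_eq, mem_Icc, ← abs_le, not_le] at hx ⊢
  exact hRB.trans_lt hx

theorem Continuous.integrable_of_measure_lt_abs_eq_zero [IsFiniteMeasure ν] {f : ℝ → ℝ}
    (hf : Continuous f) (h : ν {s | R < |s|} = 0) : Integrable f ν := by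
  rw [← Measure.restrict_eq_self_of_ae_mem (ae_mem_Icc_of_measure_lt_abs_eq_zero h le_rfl)]
  exact hf.continuousOn.integrableOn_compact isCompact_Icc

theorem integral_congr_of_eqOn_Icc {f g : ℝ → ℝ} (hfg : EqOn f g (Icc (-B) B))
    (h : ν {s | R < |s|} = 0) (hRB : R ≤ B) : ∫ x, f x ∂ν = ∫ x, g x ∂ν :=
  integral_congr_ae <| (ae_mem_Icc_of_measure_lt_abs_eq_zero h hRB).mono fun _ hx => hfg hx

end

theorem exists_bounded_continuous_eqOn_Icc {f : ℝ → ℝ} (hf : Continuous f) (a b : ℝ) :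
    ∃ g : ℝ → ℝ, Continuous g ∧ (∃ C, ∀ x, |g x| ≤ C) ∧ EqOn f g (Icc a b) := by
  obtain ⟨C, hC⟩ := (isCompact_Icc (a := a) (b := b)).exists_bound_of_continuousOn hf.continuousOn
  refine ⟨fun x => f (max a (min b x)), by fun_prop, ⟨max C |f a|, fun x => ?_⟩, fun x hx => ?_⟩
  · rcases le_total a b with hab | hab
    · exact (hC _ ⟨le_max_left _ _, max_le hab (min_le_left _ _)⟩).trans (le_max_left _ _)
    · simp only [max_eq_left ((min_le_left b x).trans hab)]
      exact le_max_right _ _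
  · simp only [min_eq_right hx.2, max_eq_right hx.1]

theorem exists_measure_lt_abs_eq_zero_of_bddAbove_integral {ι : Type*} (μ : ι → Measure ℝ)
    [∀ i, IsFiniteMeasure (μ i)] (hsupp : ∀ i, ∃ R, μ i {s | R < |s|} = 0)
    (H : ∀ f : ℝ → ℝ, Continuous f → BddAbove (range fun i => ∫ x, f x ∂μ i)) :
    ∃ R, ∀ i, μ i {s | R < |s|} = 0 := by
  by_contra! hcon
  choose i hi using fun k : ℕ => hcon k
  set m : ℕ → ℝ := fun k => (μ (i k)).real {s | (k : ℝ) < |s|}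
  have hm : ∀ k, 0 < m k := fun k => ENNReal.toReal_pos (hi k) (measure_ne_top _ _)
  obtain ⟨f, hf, hf0, hfge⟩ := exists_continuous_nonneg_ge_of_lt_abs fun k => (k + 1) / m k
  have hlarge : ∀ k : ℕ, (k : ℝ) + 1 ≤ ∫ x, f x ∂μ (i k) := by
    intro k
    obtain ⟨R, hR⟩ := hsupp (i k)
    have hmarkov := mul_meas_ge_le_integral_of_nonneg (Eventually.of_forall hf0)
      (hf.integrable_of_measure_lt_abs_eq_zero hR) ((k + 1) / m k)
    calc (k : ℝ) + 1 = (k + 1) / m k * m k := (div_mul_cancel₀ _ (hm k).ne').symm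
      _ ≤ (k + 1) / m k * (μ (i k)).real {x | (k + 1) / m k ≤ f x} := by
        gcongr ?_ * ?_
        exact measureReal_mono fun x hx => hfge k x hx
      _ ≤ _ := hmarkov
  obtain ⟨C, hC⟩ := H f hf
  have hbound := hC (mem_range_self (i ⌈C⌉₊))
  linarith [hlarge ⌈C⌉₊, Nat.le_ceil C]

theorem statement14 (μn : ℕ → Measure ℝ) (μ : Measure ℝ)
    (hn : ∀ n, Mc (μn n)) (h : Mc μ) :
    (∀ f : ℝ → ℝ, Continuous f →
      Filter.Tendsto (fun n => ∫ x : ℝ, f x ∂(μn n)) Filter.atTop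
        (nhds (∫ x : ℝ, f x ∂μ))) ↔
    ((∀ f : ℝ → ℝ, Continuous f → (∃ C : ℝ, ∀ x, |f x| ≤ C) →
        Filter.Tendsto (fun n => ∫ x : ℝ, f x ∂(μn n)) Filter.atTop
          (nhds (∫ x : ℝ, f x ∂μ))) ∧
      ∃ R : ℝ, ∀ n, μn n {s : ℝ | R < |s|} = 0) := by
  constructor
  · intro H
    have : ∀ n, IsFiniteMeasure (μn n) := fun n => (hn n).2.1
    exact ⟨fun f hf _ => H f hf, exists_measure_lt_abs_eq_zero_of_bddAbove_integral μn
      (fun n => (hn n).2.2) fun f hf => (H f hf).bddAbove_range⟩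
  · rintro ⟨hweak, R, hR⟩ f hf
    obtain ⟨R', hR'⟩ := h.2.2
    obtain ⟨g, hg, hg_bdd, hfg⟩ := exists_bounded_continuous_eqOn_Icc hf (-max R R') (max R R')
    rw [integral_congr_of_eqOn_Icc hfg hR' (le_max_right R R')]
    simpa only [integral_congr_of_eqOn_Icc hfg (hR _) (le_max_left R R')] using
      hweak g hg hg_bdd
end
end

section
/- Fix ε > 0, p ≥ 1, and let f^ε(α) = 1/(α+ε). For any probability measures μ, ν on [0,∞), the associated completely monotone kernels K_μ(t) = ∫ e^{−αt} dμ(α) and K_ν(t) = ∫ e^{−αt} dν(α) satisfy ‖K_μ − K_ν‖_{L_ε^p} ≤ c · 𝒲₁(f^ε_*μ, f^ε_*ν)^{1/p}, with c = 2 in general and c = 2(1/(2p))^{1/p} when p is an odd integer (so c = 1 for p = 1). For non-negative measures μ, ν on [0,∞) of equal mass m > 0, the same bounds hold with c replaced by 2m, respectively 2(1/(2p))^{1/p} m. If supp μ and supp ν are both bounded away from zero, the result also holds with ε = 0. -/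
/-!
Write `ρ = f^ε_* μ` and `τ = f^ε_* ν`. Since `e^{-εt} K_μ(t) = ∫ e^{-t/x} dρ(x)`, every coupling
`γ` of `ρ` and `τ` gives `e^{-εt} |K_μ(t) - K_ν(t)| ≤ ∫ |e^{-t/x} - e^{-t/y}| dγ(x, y)`, and the
left side is at most `1`, so for `p ≥ 1` its `p`-th power is at most itself. Integrating in `t`,
Tonelli and `∫₀^∞ |e^{-t/x} - e^{-t/y}| dt = |x - y|` give
`‖K_μ - K_ν‖^p_{L^p_ε} ≤ ∫ |x - y| dγ`, i.e. the bound with constant `1`, which is at most both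
constants claimed (`2p ≤ 2^p` for integers `p`). Equal masses `m` reduce to probability measures
by linearity of `μ ↦ K_μ`. Supports bounded away from `-ε` keep `ρ` and `τ` on a bounded
interval, so `𝒲₁(ρ, τ)` is finite.
-/

open MeasureTheory Filter Set
open scoped ENNReal

noncomputable section

/-- Wasserstein-1 distance (as an extended non-negative real): infimum of `∫ |x−y| dπ` over all
couplings `π` of `ρ` and `τ`. -/
noncomputable def W1 (ρ τ : Measure ℝ) : ℝ≥0∞ :=
  ⨅ (pl : Measure (ℝ × ℝ)) (_ : pl.map Prod.fst = ρ ∧ pl.map Prod.snd = τ),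
    ∫⁻ q : ℝ × ℝ, ENNReal.ofReal |q.1 - q.2| ∂pl

/-- Completely monotone kernel associated to a measure: `K_μ(t) = ∫ e^{−αt} dμ(α)`. -/
noncomputable def Kker (μ : Measure ℝ) (t : ℝ) : ℝ := ∫ α : ℝ, Real.exp (-α * t) ∂μ

/-- The ε-regularized `Lᵖ` norm `(∫₀^∞ e^{−εpt}|g(t)|ᵖ dt)^{1/p}`. -/
noncomputable def LpErr (ε p : ℝ) (g : ℝ → ℝ) : ℝ :=
  (∫ t in Set.Ioi (0 : ℝ), Real.exp (-(ε * p * t)) * |g t| ^ p) ^ (1 / p)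

open Real

theorem exp_neg_div_eq_exp_neg_inv_mul (x : ℝ) :
    (fun t => exp (-t / x)) = fun t => exp (-x⁻¹ * t) := by
  ext t
  ring_nf

theorem integral_exp_neg_div_Ioi {x : ℝ} (hx : 0 < x) :
    ∫ t in Ioi (0 : ℝ), exp (-t / x) = x := by
  rw [exp_neg_div_eq_exp_neg_inv_mul, integral_exp_mul_Ioi (neg_lt_zero.2 (inv_pos.2 hx))]
  simp

theorem integrableOn_exp_neg_div_Ioi {x : ℝ} (hx : 0 < x) :
    IntegrableOn (fun t => exp (-t / x)) (Ioi 0) := by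
  rw [exp_neg_div_eq_exp_neg_inv_mul]
  exact exp_neg_integrableOn_Ioi 0 (inv_pos.2 hx)

theorem lintegral_abs_exp_neg_div_sub_of_le {x y : ℝ} (hx : 0 < x) (hxy : x ≤ y) :
    ∫⁻ t in Ioi (0 : ℝ), ENNReal.ofReal |exp (-t / x) - exp (-t / y)| =
      ENNReal.ofReal (y - x) := by
  have hy : 0 < y := hx.trans_le hxy
  have hle : ∀ t ∈ Ioi (0 : ℝ), exp (-t / x) ≤ exp (-t / y) := fun t ht => by
    rw [exp_le_exp, neg_div, neg_div, neg_le_neg_iff]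
    exact div_le_div_of_nonneg_left (le_of_lt ht) hx hxy
  have hint : IntegrableOn (fun t => exp (-t / y) - exp (-t / x)) (Ioi 0) :=
    (integrableOn_exp_neg_div_Ioi hy).sub (integrableOn_exp_neg_div_Ioi hx)
  rw [setLIntegral_congr_fun measurableSet_Ioi fun t ht => by
      rw [abs_sub_comm, abs_of_nonneg (sub_nonneg.2 (hle t ht))],
    ← ofReal_integral_eq_lintegral_ofReal hint
      ((ae_restrict_iff' measurableSet_Ioi).2 (ae_of_all _ fun t ht => sub_nonneg.2 (hle t ht))),
    integral_sub (integrableOn_exp_neg_div_Ioi hy) (integrableOn_exp_neg_div_Ioi hx),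
    integral_exp_neg_div_Ioi hx, integral_exp_neg_div_Ioi hy]

theorem lintegral_abs_exp_neg_div_sub {x y : ℝ} (hx : 0 < x) (hy : 0 < y) :
    ∫⁻ t in Ioi (0 : ℝ), ENNReal.ofReal |exp (-t / x) - exp (-t / y)| =
      ENNReal.ofReal |x - y| := by
  rcases le_total x y with hxy | hyx
  · rw [lintegral_abs_exp_neg_div_sub_of_le hx hxy, abs_sub_comm, abs_of_nonneg (sub_nonneg.2 hxy)]
  · simp only [abs_sub_comm (exp (-_ / x))]
    rw [lintegral_abs_exp_neg_div_sub_of_le hy hyx, abs_of_nonneg (sub_nonneg.2 hyx)]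

/-- For `ρ = f^ε_* μ` this is `e^{-εt} K_μ(t)`, by `exp_mul_Kker_eq`. -/
def reciprocalKernel (ρ : Measure ℝ) (t : ℝ) : ℝ := ∫ x, exp (-t / x) ∂ρ

theorem exp_neg_div_le_one {t x : ℝ} (ht : 0 ≤ t) (hx : 0 ≤ x) : exp (-t / x) ≤ 1 :=
  exp_le_one_iff.2 (div_nonpos_of_nonpos_of_nonneg (neg_nonpos.2 ht) hx)

theorem integrable_exp_neg_div {α : Type*} [MeasurableSpace α] {γ : Measure α} [IsFiniteMeasure γ]
    {g : α → ℝ} (hg : Measurable g) (hγ : ∀ᵐ a ∂γ, 0 < g a) {t : ℝ} (ht : 0 ≤ t) :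
    Integrable (fun a => exp (-t / g a)) γ :=
  .of_bound (measurable_const.div hg).exp.aestronglyMeasurable 1 <| hγ.mono fun a ha => by
    rw [norm_of_nonneg (exp_pos _).le]
    exact exp_neg_div_le_one ht ha.le

theorem reciprocalKernel_mem_Icc {ρ : Measure ℝ} [IsProbabilityMeasure ρ] (hρ : ∀ᵐ x ∂ρ, 0 < x)
    {t : ℝ} (ht : 0 ≤ t) : reciprocalKernel ρ t ∈ Icc 0 1 := by
  refine ⟨integral_nonneg fun x => (exp_pos _).le, ?_⟩
  calc reciprocalKernel ρ t ≤ ∫ _, (1 : ℝ) ∂ρ :=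
        integral_mono_ae (integrable_exp_neg_div measurable_id hρ ht) (integrable_const 1)
          (hρ.mono fun x hx => exp_neg_div_le_one ht hx.le)
    _ = 1 := by simp

theorem ofReal_abs_reciprocalKernel_map_sub_le {γ : Measure (ℝ × ℝ)} [IsFiniteMeasure γ]
    (hγ : ∀ᵐ q ∂γ, 0 < q.1 ∧ 0 < q.2) {t : ℝ} (ht : 0 ≤ t) :
    ENNReal.ofReal |reciprocalKernel (γ.map Prod.fst) t - reciprocalKernel (γ.map Prod.snd) t| ≤
      ∫⁻ q, ENNReal.ofReal |exp (-t / q.1) - exp (-t / q.2)| ∂γ := by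
  have hint1 := integrable_exp_neg_div measurable_fst (hγ.mono fun _ h => h.1) ht
  have hint2 := integrable_exp_neg_div measurable_snd (hγ.mono fun _ h => h.2) ht
  have hint : Integrable (fun q : ℝ × ℝ => |exp (-t / q.1) - exp (-t / q.2)|) γ :=
    (hint1.sub hint2).abs
  rw [reciprocalKernel, reciprocalKernel,
    integral_map measurable_fst.aemeasurable (by fun_prop),
    integral_map measurable_snd.aemeasurable (by fun_prop), ← integral_sub hint1 hint2,
    ← ofReal_integral_eq_lintegral_ofReal hint (ae_of_all _ fun _ => abs_nonneg _)]
  exact ENNReal.ofReal_le_ofReal abs_integral_le_integral_abs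

theorem lintegral_abs_reciprocalKernel_sub_rpow_le_W1 {p : ℝ} (hp : 1 ≤ p) {ρ τ : Measure ℝ}
    [IsProbabilityMeasure ρ] [IsProbabilityMeasure τ] (hρ : ∀ᵐ x ∂ρ, 0 < x)
    (hτ : ∀ᵐ x ∂τ, 0 < x) :
    ∫⁻ t in Ioi (0 : ℝ), ENNReal.ofReal (|reciprocalKernel ρ t - reciprocalKernel τ t| ^ p) ≤
      W1 ρ τ := by
  refine le_iInf₂ fun γ ⟨hγρ, hγτ⟩ => ?_
  have : IsProbabilityMeasure γ :=
    ⟨by rw [← preimage_univ (f := Prod.fst), ← Measure.map_apply measurable_fst .univ, hγρ,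
      measure_univ]⟩
  have hγ : ∀ᵐ q ∂γ, 0 < q.1 ∧ 0 < q.2 :=
    (ae_of_ae_map measurable_fst.aemeasurable (hγρ ▸ hρ)).and
      (ae_of_ae_map measurable_snd.aemeasurable (hγτ ▸ hτ))
  subst hγρ hγτ
  -- Both kernels take values in `[0, 1]`, so their difference is at most `1` and `p ≥ 1`
  -- makes its `p`-th power smaller than itself.
  have hpointwise : ∀ t ∈ Ioi (0 : ℝ),
      ENNReal.ofReal (|reciprocalKernel (γ.map Prod.fst) t -
        reciprocalKernel (γ.map Prod.snd) t| ^ p) ≤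
        ∫⁻ q, ENNReal.ofReal |exp (-t / q.1) - exp (-t / q.2)| ∂γ := fun t ht => by
    have h1 := reciprocalKernel_mem_Icc hρ (le_of_lt ht)
    have h2 := reciprocalKernel_mem_Icc hτ (le_of_lt ht)
    refine (ENNReal.ofReal_le_ofReal (rpow_le_self_of_le_one (abs_nonneg _) ?_ hp)).trans
      (ofReal_abs_reciprocalKernel_map_sub_le hγ (le_of_lt ht))
    rw [abs_le]
    constructor <;> linarith [h1.1, h1.2, h2.1, h2.2]
  calc _ ≤ ∫⁻ t in Ioi (0 : ℝ), ∫⁻ q, ENNReal.ofReal |exp (-t / q.1) - exp (-t / q.2)| ∂γ :=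
        setLIntegral_mono' measurableSet_Ioi hpointwise
    _ = ∫⁻ q, (∫⁻ t in Ioi (0 : ℝ), ENNReal.ofReal |exp (-t / q.1) - exp (-t / q.2)|) ∂γ :=
        lintegral_lintegral_swap (by fun_prop)
    _ ≤ ∫⁻ q, ENNReal.ofReal |q.1 - q.2| ∂γ :=
        lintegral_mono_ae (hγ.mono fun q hq => (lintegral_abs_exp_neg_div_sub hq.1 hq.2).le)

theorem W1_le_of_ae_mem_Icc {ρ τ : Measure ℝ} [IsProbabilityMeasure ρ] [IsProbabilityMeasure τ]
    {a b : ℝ} (hρ : ∀ᵐ x ∂ρ, x ∈ Icc a b) (hτ : ∀ᵐ x ∂τ, x ∈ Icc a b) :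
    W1 ρ τ ≤ ENNReal.ofReal (b - a) := by
  refine (iInf₂_le (ρ.prod τ) ⟨by simp, by simp⟩).trans ?_
  calc ∫⁻ q, ENNReal.ofReal |q.1 - q.2| ∂ρ.prod τ ≤ ∫⁻ _, ENNReal.ofReal (b - a) ∂ρ.prod τ := by
        refine lintegral_mono_ae ?_
        filter_upwards [Measure.quasiMeasurePreserving_fst.ae hρ,
          Measure.quasiMeasurePreserving_snd.ae hτ] with q hq1 hq2
        exact ENNReal.ofReal_le_ofReal (abs_sub_le_of_le_of_le hq1.1 hq1.2 hq2.1 hq2.2)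
    _ = ENNReal.ofReal (b - a) := by simp

theorem exp_mul_Kker_eq (μ : Measure ℝ) (ε t : ℝ) :
    exp (-(ε * t)) * Kker μ t = reciprocalKernel (μ.map fun α => 1 / (α + ε)) t := by
  rw [reciprocalKernel, integral_map (by fun_prop) (by fun_prop), Kker, ← integral_const_mul]
  congr 1 with α
  rw [← exp_add, one_div, div_inv_eq_mul]
  ring_nf

theorem LpErr_Kker_sub_eq (ε p : ℝ) (μ ν : Measure ℝ) :
    LpErr ε p (fun t => Kker μ t - Kker ν t) =
      (∫ t in Ioi (0 : ℝ), |reciprocalKernel (μ.map fun α => 1 / (α + ε)) t -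
        reciprocalKernel (ν.map fun α => 1 / (α + ε)) t| ^ p) ^ (1 / p) := by
  rw [LpErr]
  congr 2 with t
  rw [← exp_mul_Kker_eq, ← exp_mul_Kker_eq, ← mul_sub, abs_mul, abs_of_pos (exp_pos _),
    mul_rpow (exp_pos _).le (abs_nonneg _), ← exp_mul]
  ring_nf

theorem ae_map_one_div_add_mem_Ioc {μ : Measure ℝ} {a ε : ℝ} (ha : 0 < a + ε)
    (hμ : μ (Iio a) = 0) : ∀ᵐ x ∂μ.map (fun α => 1 / (α + ε)), x ∈ Ioc 0 (a + ε)⁻¹ := by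
  rw [ae_map_iff (p := (· ∈ Ioc 0 (a + ε)⁻¹)) (by fun_prop) measurableSet_Ioc]
  have hμa : ∀ᵐ α ∂μ, a ≤ α := by
    simp only [ae_iff, not_le]
    exact hμ
  filter_upwards [hμa] with α hα
  have hα : 0 < α + ε := by linarith
  exact ⟨by positivity, by rw [one_div]; exact inv_anti₀ ha (by linarith)⟩

theorem ofReal_integral_le_lintegral_ofReal {α : Type*} [MeasurableSpace α] {μ : Measure α}
    {f : α → ℝ} (hf : 0 ≤ f) : ENNReal.ofReal (∫ a, f a ∂μ) ≤ ∫⁻ a, ENNReal.ofReal (f a) ∂μ := by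
  rw [← enorm_eq_ofReal (integral_nonneg hf)]
  exact (enorm_integral_le_lintegral_enorm f).trans_eq
    (lintegral_congr fun a => enorm_eq_ofReal (hf a))

theorem LpErr_Kker_sub_le_W1 {p ε a : ℝ} (hp : 1 ≤ p) (ha : 0 < a + ε) {μ ν : Measure ℝ}
    [IsProbabilityMeasure μ] [IsProbabilityMeasure ν] (hμ : μ (Iio a) = 0) (hν : ν (Iio a) = 0) :
    LpErr ε p (fun t => Kker μ t - Kker ν t) ≤
      (W1 (μ.map fun α => 1 / (α + ε)) (ν.map fun α => 1 / (α + ε))).toReal ^ (1 / p) := by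
  have hf : Measurable fun α : ℝ => 1 / (α + ε) := by fun_prop
  have := Measure.isProbabilityMeasure_map (μ := μ) hf.aemeasurable
  have := Measure.isProbabilityMeasure_map (μ := ν) hf.aemeasurable
  have hμ' := ae_map_one_div_add_mem_Ioc ha hμ
  have hν' := ae_map_one_div_add_mem_Ioc ha hν
  have hW : W1 (μ.map fun α => 1 / (α + ε)) (ν.map fun α => 1 / (α + ε)) ≠ ∞ :=
    ne_top_of_le_ne_top ENNReal.ofReal_ne_top <| W1_le_of_ae_mem_Icc
      (hμ'.mono fun _ hx => Ioc_subset_Icc_self hx) (hν'.mono fun _ hx => Ioc_subset_Icc_self hx)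
  have hint := lintegral_abs_reciprocalKernel_sub_rpow_le_W1 hp
    (hμ'.mono fun _ hx => hx.1) (hν'.mono fun _ hx => hx.1)
  rw [LpErr_Kker_sub_eq]
  refine rpow_le_rpow (setIntegral_nonneg measurableSet_Ioi fun _ _ => by positivity) ?_
    (by positivity)
  rw [← ENNReal.ofReal_le_iff_le_toReal hW]
  exact (ofReal_integral_le_lintegral_ofReal fun _ => by positivity).trans hint

theorem Kker_smul (c : ℝ≥0∞) (μ : Measure ℝ) (t : ℝ) : Kker (c • μ) t = c.toReal * Kker μ t := by
  rw [Kker, Kker, integral_smul_measure, smul_eq_mul]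

theorem LpErr_const_mul {p : ℝ} (hp : 0 < p) {m : ℝ} (hm : 0 ≤ m) (ε : ℝ) (g : ℝ → ℝ) :
    LpErr ε p (fun t => m * g t) = m * LpErr ε p g := by
  simp only [LpErr, abs_mul, abs_of_nonneg hm, mul_rpow hm (abs_nonneg _),
    mul_left_comm _ (m ^ p), integral_const_mul]
  rw [mul_rpow (by positivity) (setIntegral_nonneg measurableSet_Ioi fun _ _ => by positivity),
    ← rpow_mul hm, mul_one_div_cancel hp.ne', rpow_one]

theorem isProbabilityMeasure_inv_smul {α : Type*} [MeasurableSpace α] {μ : Measure α} {c : ℝ≥0∞}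
    (hμ : μ univ = c) (h0 : c ≠ 0) (htop : c ≠ ∞) : IsProbabilityMeasure (c⁻¹ • μ) :=
  ⟨by rw [Measure.smul_apply, hμ, smul_eq_mul, ENNReal.inv_mul_cancel h0 htop]⟩

theorem LpErr_Kker_sub_le_mul_W1 {p ε a m : ℝ} (hp : 1 ≤ p) (ha : 0 < a + ε) (hm : 0 < m)
    {μ ν : Measure ℝ} (hμm : μ univ = ENNReal.ofReal m) (hνm : ν univ = ENNReal.ofReal m)
    (hμ : μ (Iio a) = 0) (hν : ν (Iio a) = 0) :
    LpErr ε p (fun t => Kker μ t - Kker ν t) ≤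
      m * (W1 (((ENNReal.ofReal m)⁻¹ • μ).map fun α => 1 / (α + ε))
        (((ENNReal.ofReal m)⁻¹ • ν).map fun α => 1 / (α + ε))).toReal ^ (1 / p) := by
  have hm0 : ENNReal.ofReal m ≠ 0 := (ENNReal.ofReal_pos.2 hm).ne'
  have := isProbabilityMeasure_inv_smul hμm hm0 ENNReal.ofReal_ne_top
  have := isProbabilityMeasure_inv_smul hνm hm0 ENNReal.ofReal_ne_top
  have hK : ∀ σ : Measure ℝ, ∀ t, Kker σ t = m * Kker ((ENNReal.ofReal m)⁻¹ • σ) t :=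
    fun σ t => by
      rw [Kker_smul, ENNReal.toReal_inv, ENNReal.toReal_ofReal hm.le, mul_inv_cancel_left₀ hm.ne']
  have hKsub : (fun t => Kker μ t - Kker ν t) = fun t =>
      m * (Kker ((ENNReal.ofReal m)⁻¹ • μ) t - Kker ((ENNReal.ofReal m)⁻¹ • ν) t) := by
    ext t
    rw [hK μ, hK ν, mul_sub]
  rw [hKsub, LpErr_const_mul (by linarith) hm.le]
  exact mul_le_mul_of_nonneg_left
    (LpErr_Kker_sub_le_W1 hp ha (by simp [hμ]) (by simp [hν])) hm.le

theorem one_le_two_mul_one_div_two_mul_rpow {n : ℕ} (hn : n ≠ 0) :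
    1 ≤ 2 * (1 / (2 * n : ℝ)) ^ (1 / n : ℝ) := by
  have h2n : (2 * n : ℝ) ≤ 2 ^ n := by
    obtain ⟨k, rfl⟩ := Nat.exists_eq_succ_of_ne_zero hn
    have := Nat.lt_two_pow_self (n := k)
    exact_mod_cast (show 2 * (k + 1) ≤ 2 ^ (k + 1) by rw [pow_succ]; omega)
  have : (1 / 2 : ℝ) ≤ (1 / (2 * n)) ^ (1 / n : ℝ) :=
    calc (1 / 2 : ℝ) = ((1 / 2) ^ n) ^ (1 / n : ℝ) := by
          rw [one_div (n : ℝ), pow_rpow_inv_natCast (by norm_num) hn]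
      _ ≤ _ := rpow_le_rpow (by positivity)
          (by rw [div_pow, one_pow]; exact one_div_le_one_div_of_le (by positivity) h2n)
          (by positivity)
  linarith

theorem statement16 (p : ℝ) (hp : 1 ≤ p) (ε : ℝ) (hε : 0 ≤ ε)
    (μ ν : Measure ℝ) (hμ0 : μ (Set.Iio 0) = 0) (hν0 : ν (Set.Iio 0) = 0)
    (hok : 0 < ε ∨ ∃ a > (0 : ℝ), μ (Set.Iio a) = 0 ∧ ν (Set.Iio a) = 0) :
    (IsProbabilityMeasure μ → IsProbabilityMeasure ν →
      LpErr ε p (fun t => Kker μ t - Kker ν t) ≤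
        2 * ((W1 (μ.map (fun α => 1 / (α + ε))) (ν.map (fun α => 1 / (α + ε)))).toReal)
          ^ (1 / p) ∧
      ((∃ k : ℕ, p = 2 * (k : ℝ) + 1) →
        LpErr ε p (fun t => Kker μ t - Kker ν t) ≤
          2 * (1 / (2 * p)) ^ (1 / p) *
            ((W1 (μ.map (fun α => 1 / (α + ε))) (ν.map (fun α => 1 / (α + ε)))).toReal)
              ^ (1 / p))) ∧
    (∀ m : ℝ, 0 < m → μ Set.univ = ENNReal.ofReal m → ν Set.univ = ENNReal.ofReal m →
      LpErr ε p (fun t => Kker μ t - Kker ν t) ≤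
        2 * m * ((W1 (((ENNReal.ofReal m)⁻¹ • μ).map (fun α => 1 / (α + ε)))
            (((ENNReal.ofReal m)⁻¹ • ν).map (fun α => 1 / (α + ε)))).toReal) ^ (1 / p) ∧
      ((∃ k : ℕ, p = 2 * (k : ℝ) + 1) →
        LpErr ε p (fun t => Kker μ t - Kker ν t) ≤
          2 * (1 / (2 * p)) ^ (1 / p) * m *
            ((W1 (((ENNReal.ofReal m)⁻¹ • μ).map (fun α => 1 / (α + ε)))
              (((ENNReal.ofReal m)⁻¹ • ν).map (fun α => 1 / (α + ε)))).toReal) ^ (1 / p))) := by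
  obtain ⟨a, ha, hμa, hνa⟩ : ∃ a, 0 < a + ε ∧ μ (Iio a) = 0 ∧ ν (Iio a) = 0 := by
    rcases hok with hε' | ⟨a, ha, hμa, hνa⟩
    · exact ⟨0, by simpa using hε', hμ0, hν0⟩
    · exact ⟨a, by linarith, hμa, hνa⟩
  have hodd : (∃ k : ℕ, p = 2 * (k : ℝ) + 1) → 1 ≤ 2 * (1 / (2 * p)) ^ (1 / p) := by
    rintro ⟨k, rfl⟩
    exact_mod_cast one_le_two_mul_one_div_two_mul_rpow (n := 2 * k + 1) (by omega)
  -- The bound holds with constant `1`; both constants of the statement are at least `1`.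
  have hconst {L W C : ℝ} (hLW : L ≤ W) (hC : 1 ≤ C) (hW : 0 ≤ W) : L ≤ C * W :=
    hLW.trans (le_mul_of_one_le_left hW hC)
  refine ⟨fun _ _ => ?_, fun m hm hμm hνm => ?_⟩
  · have h := LpErr_Kker_sub_le_W1 hp ha hμa hνa
    exact ⟨hconst h one_le_two (by positivity), fun hk => hconst h (hodd hk) (by positivity)⟩
  · have h := LpErr_Kker_sub_le_mul_W1 hp ha hm hμm hνm hμa hνa
    simp only [mul_assoc _ m]
    exact ⟨hconst h one_le_two (by positivity), fun hk => hconst h (hodd hk) (by positivity)⟩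
end
end

section
/- Let 𝒟_n denote the set of discrete non-negative measures on ℝ₊ = [0,∞) with n atoms. For any finite non-negative Borel measure μ on ℝ₊ with associated completely monotone kernel K_μ = 𝓛[μ], and any ε > 0, one has inf_{μ_n ∈ 𝒟_n} ‖K_μ − K_{μ_n}‖_{L_ε^1} ≤ ‖μ‖ / (2(inf supp μ + ε) · n). If supp μ is bounded away from zero, the bound also holds with ε = 0. -/
/-!
With `s = inf supp μ + ε`, the variable `u = (α + ε)⁻¹` ranges over `(0, 1/s]` for `μ`-a.e. `α`.
Cut this interval into `n` cells of length `1/(s n)` and push `μ` forward to the exponents whose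
`u` is the midpoint of the cell; this is a measure in `𝓓_n` with the same mass. Since
`∫₀^∞ |e^{-xt} - e^{-yt}| dt = |x⁻¹ - y⁻¹|`, Tonelli bounds the `L_ε¹` error by the mean
displacement of `u`, which is at most half a cell: `‖μ‖ / (2 s n)`.
-/

open MeasureTheory Filter Set
open scoped ENNReal

noncomputable section

/-- The ε-regularized `L¹` norm `∫₀^∞ e^{−εt}|g(t)| dt`. -/
noncomputable def L1Err (ε : ℝ) (g : ℝ → ℝ) : ℝ :=
  ∫ t in Set.Ioi (0 : ℝ), Real.exp (-(ε * t)) * |g t|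

/-- `𝓓_n`: discrete non-negative measures on `ℝ₊` with `n` atoms. -/
def Dn (n : ℕ) (ρ : Measure ℝ) : Prop :=
  ∃ (β : Fin n → ℝ) (α : Fin n → ℝ), (∀ i, 0 ≤ β i) ∧ (∀ i, 0 ≤ α i) ∧
    ρ = ∑ i : Fin n, ENNReal.ofReal (β i) • Measure.dirac (α i)

/-- Closed support of a measure on `ℝ`. -/
def msuppR (μ : Measure ℝ) : Set ℝ := {s | ∀ U ∈ nhds s, μ U ≠ 0}

lemma msuppR_eq_support (μ : Measure ℝ) : msuppR μ = μ.support := by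
  ext x
  simp [msuppR, Measure.mem_support_iff_forall, pos_iff_ne_zero]

lemma msuppR_subset_Ici {μ : Measure ℝ} {b : ℝ} (hb : μ (Iio b) = 0) : msuppR μ ⊆ Ici b := by
  rw [msuppR_eq_support]
  exact Measure.support_subset_of_isClosed isClosed_Ici (by rwa [mem_ae_iff, compl_Ici])

lemma measure_Iio_sInf_msuppR {μ : Measure ℝ} (h : BddBelow (msuppR μ)) :
    μ (Iio (sInf (msuppR μ))) = 0 := by
  refine measure_mono_null (fun x hx => ?_) (Measure.measure_compl_support (μ := μ))
  rw [← msuppR_eq_support]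
  exact fun hxμ => not_le.2 hx (csInf_le h hxμ)

lemma le_sInf_msuppR {μ : Measure ℝ} (hμ : μ ≠ 0) {b : ℝ} (hb : μ (Iio b) = 0) :
    b ≤ sInf (msuppR μ) :=
  le_csInf (msuppR_eq_support μ ▸ Measure.nonempty_support hμ) (msuppR_subset_Ici hb)

lemma Dn_map_comp {X : Type*} [MeasurableSpace X] {μ : Measure X} [IsFiniteMeasure μ] {n : ℕ}
    {k : X → Fin n} (hk : Measurable k) {f : Fin n → ℝ} (hf : ∀ i, 0 ≤ f i) :
    Dn n (μ.map (f ∘ k)) := by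
  refine ⟨fun i => μ.real (k ⁻¹' {i}), f, fun _ => measureReal_nonneg, hf, ?_⟩
  have hf_meas : Measurable f := measurable_from_top
  calc μ.map (f ∘ k) = (Measure.sum fun i => μ.map k {i} • Measure.dirac i).map f := by
        rw [← Measure.map_map hf_meas hk, Measure.sum_smul_dirac]
    _ = ∑ i, ENNReal.ofReal (μ.real (k ⁻¹' {i})) • Measure.dirac (f i) := by
        rw [Measure.map_sum hf_meas.aemeasurable, Measure.sum_fintype]
        refine Finset.sum_congr rfl fun i _ => ?_
        rw [Measure.map_smul, Measure.map_dirac' hf_meas,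
          Measure.map_apply hk (measurableSet_singleton i), ofReal_measureReal]

open Real

lemma integral_exp_neg_mul_Ioi {b : ℝ} (hb : 0 < b) : ∫ t in Ioi 0, exp (-(b * t)) = b⁻¹ := by
  simpa only [mul_zero, integral_exp_neg_Ioi, neg_zero, exp_zero, smul_eq_mul, mul_one] using
    integral_comp_mul_left_Ioi (fun t => exp (-t)) 0 hb

lemma integrableOn_exp_neg_mul_Ioi {b : ℝ} (hb : 0 < b) :
    IntegrableOn (fun t => exp (-(b * t))) (Ioi 0) := by
  simpa [neg_mul] using exp_neg_integrableOn_Ioi 0 hb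

lemma lintegral_enorm_exp_neg_mul_sub_of_le {x y : ℝ} (hx : 0 < x) (hxy : x ≤ y) :
    ∫⁻ t in Ioi 0, ‖exp (-(x * t)) - exp (-(y * t))‖ₑ = ‖x⁻¹ - y⁻¹‖ₑ := by
  have hy := hx.trans_le hxy
  have hnonneg : ∀ t ∈ Ioi (0 : ℝ), 0 ≤ exp (-(x * t)) - exp (-(y * t)) := fun t ht => by
    rw [sub_nonneg, exp_le_exp, neg_le_neg_iff]
    exact mul_le_mul_of_nonneg_right hxy (le_of_lt ht)
  have hint : IntegrableOn (fun t => exp (-(x * t)) - exp (-(y * t))) (Ioi 0) :=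
    (integrableOn_exp_neg_mul_Ioi hx).sub (integrableOn_exp_neg_mul_Ioi hy)
  rw [← ofReal_integral_norm_eq_lintegral_enorm hint,
    setIntegral_congr_fun measurableSet_Ioi fun t ht => Real.norm_of_nonneg (hnonneg t ht),
    integral_sub (integrableOn_exp_neg_mul_Ioi hx) (integrableOn_exp_neg_mul_Ioi hy),
    integral_exp_neg_mul_Ioi hx, integral_exp_neg_mul_Ioi hy,
    Real.enorm_eq_ofReal (sub_nonneg.2 (inv_anti₀ hx hxy))]

lemma lintegral_enorm_exp_neg_mul_sub {x y : ℝ} (hx : 0 < x) (hy : 0 < y) :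
    ∫⁻ t in Ioi 0, ‖exp (-(x * t)) - exp (-(y * t))‖ₑ = ‖x⁻¹ - y⁻¹‖ₑ := by
  rcases le_total x y with hxy | hyx
  · exact lintegral_enorm_exp_neg_mul_sub_of_le hx hxy
  · rw [enorm_sub_rev, ← lintegral_enorm_exp_neg_mul_sub_of_le hy hyx]
    exact lintegral_congr fun t => enorm_sub_rev _ _

lemma integrable_exp_neg_mul_of_ae_nonneg_add {X : Type*} [MeasurableSpace X] {ν : Measure X}
    [IsFiniteMeasure ν] {f : X → ℝ} (hf : Measurable f) {ε t : ℝ}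
    (hfε : ∀ᵐ x ∂ν, 0 ≤ f x + ε) (ht : 0 ≤ t) :
    Integrable (fun x => exp (-f x * t)) ν := by
  refine Integrable.mono' (integrable_const (exp (ε * t))) (by fun_prop) ?_
  filter_upwards [hfε] with x hx
  rw [Real.norm_of_nonneg (exp_nonneg _), exp_le_exp]
  nlinarith

lemma L1Err_nonneg (ε : ℝ) (g : ℝ → ℝ) : 0 ≤ L1Err ε g :=
  integral_nonneg fun _ => mul_nonneg (exp_nonneg _) (abs_nonneg _)

section Pushforward

variable {μ : Measure ℝ} {q : ℝ → ℝ} {ε : ℝ}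

lemma Kker_map (hq : Measurable q) (t : ℝ) : Kker (μ.map q) t = ∫ α, exp (-q α * t) ∂μ := by
  rw [Kker, integral_map hq.aemeasurable (by fun_prop)]

lemma exp_mul_Kker_sub_Kker_map [IsFiniteMeasure μ] (hq : Measurable q)
    (hα : ∀ᵐ α ∂μ, 0 ≤ α + ε) (hqα : ∀ᵐ α ∂μ, 0 ≤ q α + ε) {t : ℝ} (ht : 0 ≤ t) :
    exp (-(ε * t)) * (Kker μ t - Kker (μ.map q) t) =
      ∫ α, (exp (-((α + ε) * t)) - exp (-((q α + ε) * t))) ∂μ := by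
  rw [Kker_map hq, Kker, ← integral_sub
    (integrable_exp_neg_mul_of_ae_nonneg_add (f := fun α => α) measurable_id hα ht)
    (integrable_exp_neg_mul_of_ae_nonneg_add hq hqα ht), ← integral_const_mul]
  congr 1 with α
  rw [mul_sub, ← exp_add, ← exp_add]
  ring_nf

lemma ofReal_L1Err_Kker_sub_Kker_map_le [IsFiniteMeasure μ] (hq : Measurable q)
    (hα : ∀ᵐ α ∂μ, 0 < α + ε) (hqα : ∀ᵐ α ∂μ, 0 < q α + ε) :
    ENNReal.ofReal (L1Err ε fun t => Kker μ t - Kker (μ.map q) t) ≤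
      ∫⁻ α, ‖(α + ε)⁻¹ - (q α + ε)⁻¹‖ₑ ∂μ := by
  set F : ℝ → ℝ → ℝ := fun t α => exp (-((α + ε) * t)) - exp (-((q α + ε) * t))
  have hF : Measurable (Function.uncurry fun t α => ‖F t α‖ₑ) := by fun_prop
  calc ENNReal.ofReal (L1Err ε fun t => Kker μ t - Kker (μ.map q) t)
      = ‖∫ t in Ioi 0, exp (-(ε * t)) * |Kker μ t - Kker (μ.map q) t|‖ₑ :=
        (Real.enorm_eq_ofReal (L1Err_nonneg ε _)).symm
    _ ≤ ∫⁻ t in Ioi 0, ‖exp (-(ε * t)) * |Kker μ t - Kker (μ.map q) t|‖ₑ :=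
        enorm_integral_le_lintegral_enorm _
    _ = ∫⁻ t in Ioi 0, ‖∫ α, F t α ∂μ‖ₑ := by
        refine setLIntegral_congr_fun measurableSet_Ioi fun t ht => ?_
        rw [← exp_mul_Kker_sub_Kker_map hq (hα.mono fun _ => le_of_lt)
          (hqα.mono fun _ => le_of_lt) (le_of_lt ht), enorm_mul, enorm_mul, enorm_abs]
    _ ≤ ∫⁻ t in Ioi 0, ∫⁻ α, ‖F t α‖ₑ ∂μ :=
        lintegral_mono fun t => enorm_integral_le_lintegral_enorm _
    _ = ∫⁻ α, (∫⁻ t in Ioi 0, ‖F t α‖ₑ) ∂μ := lintegral_lintegral_swap hF.aemeasurable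
    _ = ∫⁻ α, ‖(α + ε)⁻¹ - (q α + ε)⁻¹‖ₑ ∂μ := by
        refine lintegral_congr_ae ?_
        filter_upwards [hα, hqα] with α h₁ h₂ using lintegral_enorm_exp_neg_mul_sub h₁ h₂

end Pushforward

/-- The cell `(i, i + 1]` containing `v`, for `0 < v ≤ n`; other values of `v` give junk. -/
def gridIndex (n : ℕ) [NeZero n] (v : ℝ) : Fin n := Fin.ofNat n (⌈v⌉₊ - 1)

section Grid

variable {n : ℕ} [NeZero n]

lemma measurable_gridIndex : Measurable (gridIndex n) :=
  (measurable_from_nat (f := fun m => Fin.ofNat n (m - 1))).comp Nat.measurable_ceil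

lemma abs_sub_gridIndex_add_half_le {v : ℝ} (hv₀ : 0 < v) (hvn : v ≤ n) :
    |v - ((gridIndex n v : ℕ) + 1 / 2)| ≤ 1 / 2 := by
  have h₁ : 1 ≤ ⌈v⌉₊ := Nat.one_le_ceil_iff.2 hv₀
  have h₂ : ⌈v⌉₊ ≤ n := Nat.ceil_le.2 hvn
  have hval : (gridIndex n v : ℕ) = ⌈v⌉₊ - 1 := by
    simp [gridIndex, Nat.mod_eq_of_lt (by omega : ⌈v⌉₊ - 1 < n)]
  rw [hval, Nat.cast_sub h₁, Nat.cast_one, abs_le]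
  have := Nat.ceil_lt_add_one hv₀.le
  have := Nat.le_ceil v
  constructor <;> linarith

end Grid

lemma exists_Dn_L1Err_le {μ : Measure ℝ} [IsFiniteMeasure μ] {n : ℕ} (hn : 0 < n) {ε s : ℝ}
    (hs : 0 < s) (hεs : ε ≤ s) (hμs : ∀ᵐ α ∂μ, s ≤ α + ε) :
    ∃ ρ, Dn n ρ ∧ L1Err ε (fun t => Kker μ t - Kker ρ t) ≤ μ.real univ / (2 * s * n) := by
  have := NeZero.of_pos hn
  have hsn : 0 < s * n := by positivity
  set c : Fin n → ℝ := fun i => ((i : ℕ) + 1 / 2) / (s * n)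
  set k : ℝ → Fin n := fun α => gridIndex n (s * n * (α + ε)⁻¹)
  set q : ℝ → ℝ := fun α => (c (k α))⁻¹ - ε
  have hk : Measurable k := measurable_gridIndex.comp (by fun_prop)
  have hq : Measurable q := ((measurable_from_top (f := c)).comp hk).inv.sub_const ε
  have hc_pos : ∀ i, 0 < c i := fun i => by positivity
  have hqε : ∀ α, (q α + ε)⁻¹ = c (k α) := fun α => by simp [q]
  have hnode : ∀ i, 0 ≤ (c i)⁻¹ - ε := fun i => by
    have hci : c i ≤ s⁻¹ := by
      rw [div_le_iff₀ hsn, inv_mul_cancel_left₀ hs.ne']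
      have : ((i : ℕ) : ℝ) + 1 ≤ n := by exact_mod_cast i.isLt
      linarith
    have := (le_inv_comm₀ (hc_pos i) hs).1 hci
    linarith
  have herr : ∀ᵐ α ∂μ, ‖(α + ε)⁻¹ - (q α + ε)⁻¹‖ₑ ≤ ENNReal.ofReal (1 / (2 * s * n)) := by
    filter_upwards [hμs] with α hα
    have hαε := hs.trans_le hα
    have hv₀ : 0 < s * n * (α + ε)⁻¹ := by positivity
    have hvn : s * n * (α + ε)⁻¹ ≤ n := by
      rw [← div_eq_mul_inv, div_le_iff₀ hαε]
      nlinarith [Nat.cast_nonneg (α := ℝ) n]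
    rw [hqε, Real.enorm_eq_ofReal_abs]
    refine ENNReal.ofReal_le_ofReal ?_
    calc |(α + ε)⁻¹ - c (k α)| = |s * n * (α + ε)⁻¹ - ((k α : ℕ) + 1 / 2)| / (s * n) := by
          rw [← abs_of_pos hsn, ← abs_div, abs_of_pos hsn]
          congr 1
          simp only [c]
          field_simp
      _ ≤ 1 / 2 / (s * n) := by gcongr; exact abs_sub_gridIndex_add_half_le hv₀ hvn
      _ = 1 / (2 * s * n) := by ring
  refine ⟨μ.map q, Dn_map_comp hk hnode, ?_⟩
  have hbound := (ofReal_L1Err_Kker_sub_Kker_map_le hq (hμs.mono fun α h => hs.trans_le h)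
    (ae_of_all _ fun α => by simp only [q, sub_add_cancel, inv_pos, hc_pos])).trans
    ((lintegral_mono_ae herr).trans_eq (lintegral_const _))
  rwa [← ENNReal.ofReal_le_ofReal_iff (by positivity), div_eq_inv_mul, ENNReal.ofReal_mul
    (by positivity), ofReal_measureReal, ← one_div]

theorem statement17 (μ : Measure ℝ) (hfin : IsFiniteMeasure μ) (hμ0 : μ (Set.Iio 0) = 0)
    (n : ℕ) (hn : 0 < n) (ε : ℝ) (hε : 0 ≤ ε)
    (hok : 0 < ε ∨ ∃ a > (0 : ℝ), μ (Set.Iio a) = 0) :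
    sInf {r : ℝ | ∃ ρ : Measure ℝ, Dn n ρ ∧ r = L1Err ε (fun t => Kker μ t - Kker ρ t)} ≤
      (μ Set.univ).toReal / (2 * (sInf (msuppR μ) + ε) * n) := by
  set a := sInf (msuppR μ)
  have ha₀ : 0 ≤ a := Real.sInf_nonneg fun _ hx => msuppR_subset_Ici hμ0 hx
  obtain ⟨ρ, hρ, hle⟩ : ∃ ρ, Dn n ρ ∧
      L1Err ε (fun t => Kker μ t - Kker ρ t) ≤ μ.real univ / (2 * (a + ε) * n) := by
    rcases eq_or_ne μ 0 with rfl | hμ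
    · obtain ⟨ρ, hρ, hle⟩ := exists_Dn_L1Err_le (μ := 0) (ε := ε) (s := ε + 1) hn (by linarith)
        (by linarith) (by simp)
      exact ⟨ρ, hρ, by simpa using hle⟩
    have hs : 0 < a + ε := by
      rcases hok with hε₀ | ⟨b, hb, hμb⟩
      · linarith
      · linarith [le_sInf_msuppR hμ hμb]
    have hμa := measure_Iio_sInf_msuppR ⟨0, msuppR_subset_Ici hμ0⟩
    refine exists_Dn_L1Err_le hn hs (by linarith) ?_
    filter_upwards [measure_eq_zero_iff_ae_notMem.1 hμa] with α hα
    linarith [notMem_Iio.1 hα]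
  refine le_trans (csInf_le ⟨0, ?_⟩ ⟨ρ, hρ, rfl⟩) hle
  rintro _ ⟨_, _, rfl⟩
  exact L1Err_nonneg _ _
end
end
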